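/- Let X be a compact Hausdorff space with uniformity 𝒰 and f : X → X continuous. Then (X,f) is minimal if and only if for every entourage E ∈ 𝒰 there exist D ∈ 𝒰 and n ∈ ℕ such that every D-pseudo-orbit (x_i)_{i≥0} satisfies B_E({x_0,…,x_n}) = X. -/

import Mathlib

/-!
In a minimal system every orbit enters each nonempty open set, and by compactness it does so
within a time bound that is uniform in the starting point. Cover `X` by finitely many small balls
and let `n` be the largest of their entry times. If `D` is small enough, uniform continuity keeps a
`D`-pseudo-orbit close to the true orbit of its initial point up to time `n`, so it passes near
every point by time `n`. Conversely, every tail of an orbit is a `D`-pseudo-orbit for every `D`,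
so it comes `E`-close to every point, which puts every point in the ω-limit set.
-/

open UniformSpace Set Filter Function Topology
open scoped Uniformity

def omegaLim {X : Type*} [TopologicalSpace X] (f : X → X) (x : X) : Set X :=
  ⋂ N : ℕ, closure {y | ∃ n > N, f^[n] x = y}

def IsPseudoOrbit {X : Type*} (f : X → X) (D : SetRel X X) (x : ℕ → X) : Prop :=
  ∀ i, (f (x i), x (i + 1)) ∈ D

section Topological

variable {X : Type*} [TopologicalSpace X] {f : X → X}

theorem mem_omegaLim_iff {x c : X} :
    c ∈ omegaLim f x ↔ ∀ U ∈ 𝓝 c, ∀ N, ∃ n > N, f^[n] x ∈ U := by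
  simp only [omegaLim, mem_iInter, mem_closure_iff_nhds, Set.Nonempty, mem_inter_iff,
    mem_ofPred_eq]
  constructor
  · intro h U hU N
    obtain ⟨_, hy, n, hn, rfl⟩ := h N U hU
    exact ⟨n, hn, hy⟩
  · intro h N U hU
    obtain ⟨n, hn, hy⟩ := h U hU N
    exact ⟨_, hy, n, hn, rfl⟩

theorem exists_uniform_hitting_time [CompactSpace X] (hf : Continuous f) {U : Set X}
    (hU : IsOpen U) (hit : ∀ z, ∃ i, f^[i] z ∈ U) : ∃ m, ∀ z, ∃ i ≤ m, f^[i] z ∈ U := by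
  obtain ⟨s, hs⟩ := isCompact_univ.elim_finite_subcover (fun i => f^[i] ⁻¹' U)
    (fun i => hU.preimage (hf.iterate i)) fun z _ => mem_iUnion.2 (hit z)
  refine ⟨s.sup id, fun z => ?_⟩
  obtain ⟨i, hi, hiz⟩ := mem_iUnion₂.1 (hs (mem_univ z))
  exact ⟨i, Finset.le_sup (f := id) hi, hiz⟩

end Topological

section Uniform

variable {X : Type*} [UniformSpace X] {f : X → X}

theorem isPseudoOrbit_orbit {D : SetRel X X} (hD : D ∈ 𝓤 X) (x : X) :
    IsPseudoOrbit f D fun i => f^[i] x := fun i => by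
  show (f (f^[i] x), f^[i + 1] x) ∈ D
  rw [iterate_succ_apply']
  exact refl_mem_uniformity hD

theorem exists_pseudoOrbit_shadows_orbit (hf : UniformContinuous f) (n : ℕ) {E : SetRel X X}
    (hE : E ∈ 𝓤 X) :
    ∃ D ∈ 𝓤 X, ∀ x, IsPseudoOrbit f D x → ∀ i ≤ n, (f^[i] (x 0), x i) ∈ E := by
  induction n generalizing E with
  | zero =>
    refine ⟨E, hE, fun x _ i hi => ?_⟩
    obtain rfl := Nat.le_zero.1 hi
    exact refl_mem_uniformity hE
  | succ n ih =>
    obtain ⟨H, hH, hHE⟩ := comp_mem_uniformity_sets hE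
    -- Track the orbit up to time `n` so closely that one more step of `f` keeps it `H`-close.
    obtain ⟨D, hD, hshadow⟩ := ih (inter_mem hE (hf hH))
    refine ⟨D ∩ H, inter_mem hD hH, fun x hx i hi => ?_⟩
    have hxD : IsPseudoOrbit f D x := fun i => (hx i).1
    obtain hi | rfl := Nat.le_succ_iff.1 hi
    · exact (hshadow x hxD i hi).1
    · rw [iterate_succ_apply']
      exact hHE ⟨f (x n), (hshadow x hxD n le_rfl).2, (hx n).2⟩

theorem exists_pseudoOrbit_net_of_minimal [CompactSpace X] (hf : Continuous f)
    (hmin : ∀ x, omegaLim f x = univ) {E : SetRel X X} (hE : E ∈ 𝓤 X) :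
    ∃ D ∈ 𝓤 X, ∃ n, ∀ x, IsPseudoOrbit f D x → ∀ y, ∃ i ≤ n, (x i, y) ∈ E := by
  obtain ⟨W, hW, _, hWE⟩ := comp_symm_mem_uniformity_sets hE
  obtain ⟨V, hV, hVo, _, hVW⟩ := comp_open_symm_mem_uniformity_sets hW
  obtain ⟨s, hs⟩ := isCompact_univ.elim_finite_subcover (fun c => ball c V)
    (fun c => isOpen_ball c hVo) fun y _ => mem_iUnion.2 ⟨y, mem_ball_self y hV⟩
  have hit (c : X) : ∃ m, ∀ z, ∃ i ≤ m, f^[i] z ∈ ball c V := by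
    refine exists_uniform_hitting_time hf (isOpen_ball c hVo) fun z => ?_
    have hc : c ∈ omegaLim f z := hmin z ▸ mem_univ c
    obtain ⟨i, -, hi⟩ := mem_omegaLim_iff.1 hc _ (ball_mem_nhds c hV) 0
    exact ⟨i, hi⟩
  choose m hm using hit
  obtain ⟨D, hD, hshadow⟩ :=
    exists_pseudoOrbit_shadows_orbit (CompactSpace.uniformContinuous_of_continuous hf) (s.sup m) hW
  refine ⟨D, hD, s.sup m, fun x hx y => ?_⟩
  obtain ⟨c, hc, hyc⟩ := mem_iUnion₂.1 (hs (mem_univ y))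
  obtain ⟨i, him, hic⟩ := hm c (x 0)
  have hin : i ≤ s.sup m := him.trans (Finset.le_sup hc)
  exact ⟨i, hin, hWE ⟨_, SetRel.symm _ (hshadow x hx i hin), hVW (mem_comp_of_mem_ball hic hyc)⟩⟩

theorem minimal_of_exists_pseudoOrbit_net
    (h : ∀ E ∈ 𝓤 X, ∃ D ∈ 𝓤 X, ∃ n : ℕ, ∀ x, IsPseudoOrbit f D x → ∀ y, ∃ i ≤ n, (x i, y) ∈ E)
    (x : X) : omegaLim f x = univ := by
  refine eq_univ_of_forall fun y => mem_omegaLim_iff.2 fun U hU N => ?_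
  obtain ⟨D, hD, _, hnet⟩ := h _ (mem_nhds_uniformity_iff_left.1 hU)
  obtain ⟨i, -, hi⟩ := hnet _ (isPseudoOrbit_orbit hD (f^[N + 1] x)) y
  refine ⟨i + (N + 1), by omega, ?_⟩
  rw [iterate_add_apply]
  exact hi rfl

end Uniform

theorem minimal_iff_pseudoOrbit_net_uniform_general {X : Type*} [UniformSpace X] [CompactSpace X]
    (f : X → X) (hf : Continuous f) :
    (∀ x : X, omegaLim f x = Set.univ) ↔
      ∀ E ∈ uniformity X, ∃ D ∈ uniformity X, ∃ n : ℕ, ∀ x : ℕ → X,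
        (∀ i, (f (x i), x (i + 1)) ∈ D) →
        ∀ y : X, ∃ i ≤ n, (x i, y) ∈ E :=
  ⟨fun hmin _ hE => exists_pseudoOrbit_net_of_minimal hf hmin hE, minimal_of_exists_pseudoOrbit_net⟩

theorem minimal_iff_pseudoOrbit_net_uniform {X : Type*} [UniformSpace X] [CompactSpace X]
    [T2Space X] (f : X → X) (hf : Continuous f) :
    (∀ x : X, omegaLim f x = Set.univ) ↔
      ∀ E ∈ uniformity X, ∃ D ∈ uniformity X, ∃ n : ℕ, ∀ x : ℕ → X,
        (∀ i, (f (x i), x (i + 1)) ∈ D) →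
        ∀ y : X, ∃ i ≤ n, (x i, y) ∈ E :=
  minimal_iff_pseudoOrbit_net_uniform_general f hf
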